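/- Let n ≥ 2, p, q ∈ (0,1), let π be a prior mass function on Θ_n with π(θ) > 0 for all θ, and fix θ ∈ Θ_n. Let B ⊆ Θ_n satisfy P_θ Π(B | X^n) ≥ 1 − β for some β ∈ (0,1), let γ ∈ (0,1), and let D : 𝒳_n → 𝒫(Θ_n) be any map with Π(D(x) | X^n = x) ≥ 1 − γ for all x ∈ 𝒳_n (a credible set of credible level 1 − γ). Then P_θ(B ∩ D(X^n) ≠ ∅) ≥ 1 − β/(1 − γ). -/

import Mathlib

/-! On the event that `B` misses `D(X^n)`, the set `B` is disjoint from a set of posterior mass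
at least `1 - γ`, so `Π(B | X^n) ≤ γ` there, while always `Π(B | X^n) ≤ 1`. Hence
`1 - β ≤ P_θ Π(B | X^n) ≤ P + γ (1 - P)` with `P = P_θ(B ∩ D(X^n) ≠ ∅)`, which rearranges to
`P ≥ 1 - β / (1 - γ)`. -/

open Finset Real Filter

/-- The set of potential edges of an `n`-vertex graph: pairs `(i,j)` with `i < j`. -/
abbrev Edge (n : ℕ) := {e : Fin n × Fin n // e.1 < e.2}

/-- An observed graph: an edge indicator for each potential edge. -/
abbrev ObsGraph (n : ℕ) := Edge n → Bool

/-- Edge probability under assignment `θ`: `p` within communities, `q` between. -/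
noncomputable def edgeProb {n : ℕ} (p q : ℝ) (θ : Fin n → Bool) (e : Edge n) : ℝ :=
  if θ e.val.1 = θ e.val.2 then p else q

/-- Probability mass function of the observed graph under `θ`. -/
noncomputable def graphPMF {n : ℕ} (p q : ℝ) (θ : Fin n → Bool) (x : ObsGraph n) : ℝ :=
  ∏ e : Edge n, if x e then edgeProb p q θ e else 1 - edgeProb p q θ e

/-- Hellinger affinity of Bernoulli parameters. -/
noncomputable def rho (p q : ℝ) : ℝ := Real.sqrt (p * q) + Real.sqrt ((1 - p) * (1 - q))

/-- Edges whose probability changes from `p` to `q` when replacing `θ` by `η`. -/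
def D1 {n : ℕ} (θ η : Fin n → Bool) : Finset (Fin n × Fin n) :=
  Finset.univ.filter fun e => e.1 < e.2 ∧ θ e.1 = θ e.2 ∧ η e.1 ≠ η e.2

/-- Edges whose probability changes from `q` to `p` when replacing `θ` by `η`. -/
def D2 {n : ℕ} (θ η : Fin n → Bool) : Finset (Fin n × Fin n) :=
  Finset.univ.filter fun e => e.1 < e.2 ∧ θ e.1 ≠ θ e.2 ∧ η e.1 = η e.2

/-- Hamming distance. -/
def hdist {n : ℕ} (θ η : Fin n → Bool) : ℕ := (Finset.univ.filter fun i => θ i ≠ η i).card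

/-- The metric `k(θ,η) = h(θ,η) ∧ (n - h(θ,η))`. -/
def kdist {n : ℕ} (θ η : Fin n → Bool) : ℕ := min (hdist θ η) (n - hdist θ η)

/-- Size of the smallest community. -/
def countOnes {n : ℕ} (θ : Fin n → Bool) : ℕ := (Finset.univ.filter fun i => θ i = true).card

/-- The parameter space `Θ_n`. -/
def Theta (n : ℕ) : Finset (Fin n → Bool) :=
  Finset.univ.filter fun θ => 2 * countOnes θ ≤ n ∧
    ∀ i : Fin n, 2 * countOnes θ = n → (i : ℕ) = 0 → θ i = false

/-- Posterior mass of `A ⊆ Θ_n` given data `x`, under prior mass function `π`. -/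
noncomputable def postMass {n : ℕ} (p q : ℝ) (pri : (Fin n → Bool) → ℝ)
    (A : Finset (Fin n → Bool)) (x : ObsGraph n) : ℝ :=
  (∑ η ∈ A, pri η * graphPMF p q η x) / (∑ η ∈ Theta n, pri η * graphPMF p q η x)

/-- `P_θ`-expectation of the posterior mass of `A`. -/
noncomputable def expPostMass {n : ℕ} (p q : ℝ) (pri : (Fin n → Bool) → ℝ)
    (θ : Fin n → Bool) (A : Finset (Fin n → Bool)) : ℝ :=
  ∑ x : ObsGraph n, graphPMF p q θ x * postMass p q pri A x

/-- The uniform prior on `Θ_n`. -/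
noncomputable def unifPrior (n : ℕ) : (Fin n → Bool) → ℝ := fun _ => ((2:ℝ) ^ (n - 1))⁻¹

/-- Hamming ball `B_n(θ,k)` inside `Θ_n`. -/
def hball {n : ℕ} (θ : Fin n → Bool) (k : ℕ) : Finset (Fin n → Bool) :=
  (Theta n).filter fun η => kdist η θ ≤ k

theorem sum_mul_le_sum_add_mul_sum_compl {α : Type*} [Fintype α] [DecidableEq α]
    (w f : α → ℝ) (s : Finset α) (γ : ℝ) (hw : ∀ x, 0 ≤ w x) (hf : ∀ x, f x ≤ 1)
    (hfs : ∀ x ∉ s, f x ≤ γ) :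
    ∑ x, w x * f x ≤ ∑ x ∈ s, w x + γ * ∑ x ∈ sᶜ, w x := by
  rw [← Finset.sum_add_sum_compl s, Finset.mul_sum]
  refine add_le_add (Finset.sum_le_sum fun x _ => ?_) (Finset.sum_le_sum fun x hx => ?_)
  · exact mul_le_of_le_one_right (hw x) (hf x)
  · rw [mul_comm γ]
    exact mul_le_mul_of_nonneg_left (hfs x (Finset.mem_compl.1 hx)) (hw x)

theorem one_sub_div_le_sum_of_le_sum_mul {α : Type*} [Fintype α] [DecidableEq α]
    (w f : α → ℝ) (s : Finset α) {β γ : ℝ} (hw : ∀ x, 0 ≤ w x) (hw1 : ∑ x, w x = 1)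
    (hf : ∀ x, f x ≤ 1) (hfs : ∀ x ∉ s, f x ≤ γ) (hγ : γ < 1)
    (hβ : 1 - β ≤ ∑ x, w x * f x) :
    1 - β / (1 - γ) ≤ ∑ x ∈ s, w x := by
  have hsplit := sum_mul_le_sum_add_mul_sum_compl w f s γ hw hf hfs
  have hcompl : ∑ x ∈ sᶜ, w x = 1 - ∑ x ∈ s, w x := by
    rw [← hw1, ← Finset.sum_add_sum_compl s]; ring
  rw [hcompl] at hsplit
  rw [sub_le_comm, le_div_iff₀ (sub_pos.2 hγ)]
  nlinarith

theorem graphPMF_nonneg {n : ℕ} {p q : ℝ} (hp : p ∈ Set.Icc (0:ℝ) 1) (hq : q ∈ Set.Icc (0:ℝ) 1)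
    (θ : Fin n → Bool) (x : ObsGraph n) : 0 ≤ graphPMF p q θ x := by
  refine Finset.prod_nonneg fun e _ => ?_
  unfold edgeProb
  split <;> split <;> linarith [hp.1, hp.2, hq.1, hq.2]

theorem sum_graphPMF {n : ℕ} (p q : ℝ) (θ : Fin n → Bool) :
    ∑ x : ObsGraph n, graphPMF p q θ x = 1 := by
  unfold graphPMF
  rw [← Fintype.prod_sum fun e (b : Bool) => if b then edgeProb p q θ e else 1 - edgeProb p q θ e]
  simp

theorem postMass_add_postMass_le_one {n : ℕ} {p q : ℝ} (hp : p ∈ Set.Icc (0:ℝ) 1)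
    (hq : q ∈ Set.Icc (0:ℝ) 1) {pri : (Fin n → Bool) → ℝ} (hpri : ∀ η ∈ Theta n, 0 ≤ pri η)
    {A A' : Finset (Fin n → Bool)} (hdisj : Disjoint A A') (hsub : A ∪ A' ⊆ Theta n)
    (x : ObsGraph n) :
    postMass p q pri A x + postMass p q pri A' x ≤ 1 := by
  have hw : ∀ η ∈ Theta n, 0 ≤ pri η * graphPMF p q η x := fun η hη =>
    mul_nonneg (hpri η hη) (graphPMF_nonneg hp hq η x)
  rw [postMass, postMass, ← add_div, ← Finset.sum_union hdisj]
  exact div_le_one_of_le₀ (Finset.sum_le_sum_of_subset_of_nonneg hsub fun η hη _ => hw η hη)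
    (Finset.sum_nonneg hw)

theorem postMass_le_one {n : ℕ} {p q : ℝ} (hp : p ∈ Set.Icc (0:ℝ) 1)
    (hq : q ∈ Set.Icc (0:ℝ) 1) {pri : (Fin n → Bool) → ℝ} (hpri : ∀ η ∈ Theta n, 0 ≤ pri η)
    {A : Finset (Fin n → Bool)} (hA : A ⊆ Theta n) (x : ObsGraph n) :
    postMass p q pri A x ≤ 1 := by
  simpa [postMass] using
    postMass_add_postMass_le_one hp hq hpri (Finset.disjoint_empty_right A) (by simpa using hA) x

theorem stmt16_general (n : ℕ) (p q : ℝ) (hp : p ∈ Set.Ioo (0:ℝ) 1)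
    (hq : q ∈ Set.Ioo (0:ℝ) 1) (pri : (Fin n → Bool) → ℝ)
    (hpri : ∀ θ ∈ Theta n, 0 < pri θ)
    (θ : Fin n → Bool)
    (B : Finset (Fin n → Bool)) (hB : B ⊆ Theta n)
    (β γ : ℝ) (hγ : γ ∈ Set.Ioo (0:ℝ) 1)
    (hpost : 1 - β ≤ expPostMass p q pri θ B)
    (D : ObsGraph n → Finset (Fin n → Bool)) (hDsub : ∀ x, D x ⊆ Theta n)
    (hD : ∀ x, 1 - γ ≤ postMass p q pri (D x) x) :
    1 - β / (1 - γ)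
      ≤ ∑ x ∈ Finset.univ.filter (fun x : ObsGraph n => (B ∩ D x).Nonempty),
          graphPMF p q θ x := by
  have hp' := Set.Ioo_subset_Icc_self hp
  have hq' := Set.Ioo_subset_Icc_self hq
  have hpri' : ∀ η ∈ Theta n, 0 ≤ pri η := fun η hη => (hpri η hη).le
  have hmiss : ∀ x, x ∉ Finset.univ.filter (fun x : ObsGraph n => (B ∩ D x).Nonempty) →
      postMass p q pri B x ≤ γ := by
    intro x hx
    have hdisj : Disjoint B (D x) := by
      simpa [Finset.not_nonempty_iff_eq_empty, Finset.disjoint_iff_inter_eq_empty] using hx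
    linarith [postMass_add_postMass_le_one hp' hq' hpri' hdisj (Finset.union_subset hB (hDsub x)) x,
      hD x]
  exact one_sub_div_le_sum_of_le_sum_mul _ _ _ (graphPMF_nonneg hp' hq' θ) (sum_graphPMF p q θ)
    (postMass_le_one hp' hq' hpri' hB) hmiss hγ.2 hpost

/-- if `B` has expected posterior mass at least `1 − β` and `D(X^n)` is a
credible set of level `1 − γ`, then `P_θ(B ∩ D(X^n) ≠ ∅) ≥ 1 − β/(1 − γ)`. -/
theorem stmt16 (n : ℕ) (hn : 2 ≤ n) (p q : ℝ) (hp : p ∈ Set.Ioo (0:ℝ) 1)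
    (hq : q ∈ Set.Ioo (0:ℝ) 1) (pri : (Fin n → Bool) → ℝ)
    (hpri : ∀ θ ∈ Theta n, 0 < pri θ)
    (θ : Fin n → Bool) (hθ : θ ∈ Theta n)
    (B : Finset (Fin n → Bool)) (hB : B ⊆ Theta n)
    (β γ : ℝ) (hβ : β ∈ Set.Ioo (0:ℝ) 1) (hγ : γ ∈ Set.Ioo (0:ℝ) 1)
    (hpost : 1 - β ≤ expPostMass p q pri θ B)
    (D : ObsGraph n → Finset (Fin n → Bool)) (hDsub : ∀ x, D x ⊆ Theta n)
    (hD : ∀ x, 1 - γ ≤ postMass p q pri (D x) x) :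
    1 - β / (1 - γ)
      ≤ ∑ x ∈ Finset.univ.filter (fun x : ObsGraph n => (B ∩ D x).Nonempty),
          graphPMF p q θ x :=
  stmt16_general n p q hp hq pri hpri θ B hB β γ hγ hpost D hDsub hD
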